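/- For every integer n ≥ 9, λ1(A(K_n,H_1(n−5,1)^−)) > n/2 − 1. -/

import Mathlib

/-!
The `n - 4` pendant vertices `5, …, n` of `H₁(n-5,1)` are pairwise non-adjacent, so
`A(K_n, H₁(n-5,1)⁻)` has the principal submatrix `J - I` of order `n - 4`. The Rayleigh quotient
of its indicator vector is `n - 5`, hence `λ₁ ≥ n - 5 > n/2 - 1` for `n ≥ 9`.
-/

open Matrix

/-- The signed-complete-graph matrix `A(K_n, H^-)`: zero diagonal, `-1` on edges of `H`
(vertices labelled `1, …, n`, index `i : Fin n` corresponds to label `i+1`), `+1` otherwise. -/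
noncomputable def signMat (n : ℕ) (E : ℕ → ℕ → Prop) : Matrix (Fin n) (Fin n) ℝ :=
  open scoped Classical in
  Matrix.of fun i j => if i = j then 0 else if E ((i : ℕ) + 1) ((j : ℕ) + 1) then -1 else 1

/-- The largest eigenvalue of a real matrix (the supremum of its spectrum). -/
noncomputable def lam1 {n : ℕ} (M : Matrix (Fin n) (Fin n) ℝ) : ℝ :=
  sSup (spectrum ℝ M)

/-- `{i, j} = {a, b}` as an (unordered) edge. -/
def adjPair (a b i j : ℕ) : Prop := (i = a ∧ j = b) ∨ (i = b ∧ j = a)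

/-- `U₁`: triangle `1 2 3` together with the pendant edges `{1, i}` for `4 ≤ i ≤ n`;
i.e. vertex `1` is adjacent to every other vertex, plus the edge `{2,3}`. -/
def U1edge (i j : ℕ) : Prop :=
  (i = 1 ∧ 2 ≤ j) ∨ (j = 1 ∧ 2 ≤ i) ∨ adjPair 2 3 i j

/-- `D_{1,n-3}`: edges `{1,2}`, `{2,3}` and `{3,i}` for `4 ≤ i ≤ n`. -/
def Dedge (i j : ℕ) : Prop :=
  adjPair 1 2 i j ∨ adjPair 2 3 i j ∨ (i = 3 ∧ 4 ≤ j) ∨ (j = 3 ∧ 4 ≤ i)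

/-- `U₂`: triangles `1 2 3` and `1 4 5` sharing vertex `1`, plus pendant edges `{1,i}`
for `6 ≤ i ≤ n`; i.e. vertex `1` adjacent to all, plus edges `{2,3}` and `{4,5}`. -/
def U2edge (i j : ℕ) : Prop :=
  (i = 1 ∧ 2 ≤ j) ∨ (j = 1 ∧ 2 ≤ i) ∨ adjPair 2 3 i j ∨ adjPair 4 5 i j

/-- `H₁(s,t)` on `n = s + t + 4` vertices: triangle `1 2 3`, `s` pendant vertices
`5, …, s+4` at vertex `1`, vertex `4` adjacent to `1`, and `t` pendant vertices
`s+5, …, s+t+4` at vertex `4`. -/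
def H1edge (s t : ℕ) (i j : ℕ) : Prop :=
  adjPair 1 2 i j ∨ adjPair 1 3 i j ∨ adjPair 2 3 i j ∨ adjPair 1 4 i j ∨
  (i = 1 ∧ 5 ≤ j ∧ j ≤ s + 4) ∨ (j = 1 ∧ 5 ≤ i ∧ i ≤ s + 4) ∨
  (i = 4 ∧ s + 5 ≤ j ∧ j ≤ s + t + 4) ∨ (j = 4 ∧ s + 5 ≤ i ∧ i ≤ s + t + 4)

/-- `H₂(s,t)` on `n = s + t + 5` vertices: triangle `1 2 3`, edges `{1,4}` and `{4,5}`,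
`s` pendant vertices `6, …, s+5` at vertex `4`, and `t` pendant vertices
`s+6, …, s+t+5` at vertex `5`. -/
def H2edge (s t : ℕ) (i j : ℕ) : Prop :=
  adjPair 1 2 i j ∨ adjPair 1 3 i j ∨ adjPair 2 3 i j ∨ adjPair 1 4 i j ∨ adjPair 4 5 i j ∨
  (i = 4 ∧ 6 ≤ j ∧ j ≤ s + 5) ∨ (j = 4 ∧ 6 ≤ i ∧ i ≤ s + 5) ∨
  (i = 5 ∧ s + 6 ≤ j ∧ j ≤ s + t + 5) ∨ (j = 5 ∧ s + 6 ≤ i ∧ i ≤ s + t + 5)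

/-- `K_{1,s} ∪ t·P₂` on `n = s + 1 + 2t` vertices: star with center `1` and leaves
`2, …, s+1`, together with the `t` disjoint edges `{s+2k+2, s+2k+3}`, `0 ≤ k < t`. -/
def starMatchEdge (s t : ℕ) (i j : ℕ) : Prop :=
  (i = 1 ∧ 2 ≤ j ∧ j ≤ s + 1) ∨ (j = 1 ∧ 2 ≤ i ∧ i ≤ s + 1) ∨
  (∃ k, k < t ∧ adjPair (s + 2 * k + 2) (s + 2 * k + 3) i j)

/-- The quotient matrix `Q₃(s,t)`. -/
noncomputable def Q3 (s t : ℕ) : Matrix (Fin 6) (Fin 6) ℝ :=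
  !![0, -1, -1, -1, -(s : ℝ), (t : ℝ);
     -1, 0, -1, 1, (s : ℝ), (t : ℝ);
     -1, -1, 0, 1, (s : ℝ), (t : ℝ);
     -1, 1, 1, 0, (s : ℝ), -(t : ℝ);
     -1, 1, 1, 1, (s : ℝ) - 1, (t : ℝ);
     1, 1, 1, -1, (s : ℝ), (t : ℝ) - 1]

/-- The quotient matrix `Q₄(s,t)`. -/
noncomputable def Q4 (s t : ℕ) : Matrix (Fin 7) (Fin 7) ℝ :=
  !![0, -1, -1, -1, 1, (s : ℝ), (t : ℝ);
     -1, 0, -1, 1, 1, (s : ℝ), (t : ℝ);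
     -1, -1, 0, 1, 1, (s : ℝ), (t : ℝ);
     -1, 1, 1, 0, -1, -(s : ℝ), (t : ℝ);
     1, 1, 1, -1, 0, (s : ℝ), -(t : ℝ);
     1, 1, 1, -1, 1, (s : ℝ) - 1, (t : ℝ);
     1, 1, 1, 1, -1, (s : ℝ), (t : ℝ) - 1]

/-- `λ₁ • 1 - M` is positive semidefinite, its spectrum being `λ₁ - spectrum M ⊆ [0, ∞)`. -/
theorem dotProduct_mulVec_le_lam1_mul {n : ℕ} {M : Matrix (Fin n) (Fin n) ℝ}
    (hM : M.IsHermitian) (x : Fin n → ℝ) : x ⬝ᵥ (M *ᵥ x) ≤ lam1 M * (x ⬝ᵥ x) := by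
  have hpsd : (algebraMap ℝ _ (lam1 M) - M).PosSemidef := by
    refine posSemidef_iff_isHermitian_and_spectrum_nonneg.mpr ⟨?_, ?_⟩
    · exact (isHermitian_diagonal_of_self_adjoint _ (by simp [IsSelfAdjoint])).sub hM
    · rw [← spectrum.singleton_sub_eq]
      rintro _ ⟨_, rfl, μ, hμ, rfl⟩
      exact sub_nonneg.mpr (le_csSup M.finite_spectrum.bddAbove hμ)
  simpa [sub_mulVec, dotProduct_sub, Algebra.algebraMap_eq_smul_one, smul_mulVec,
    dotProduct_smul] using hpsd.dotProduct_mulVec_nonneg x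

theorem signMat_isHermitian {n : ℕ} {E : ℕ → ℕ → Prop} (hE : ∀ i j, E i j → E j i) :
    (signMat n E).IsHermitian := by
  ext i j
  simp only [conjTranspose_apply, signMat, of_apply, star_trivial, eq_comm (a := j)]
  rw [propext ⟨hE _ _, hE _ _⟩]

theorem adjPair_comm (a b i j : ℕ) : adjPair a b i j ↔ adjPair a b j i := by
  unfold adjPair
  tauto

theorem H1edge_symm (s t i j : ℕ) : H1edge s t i j → H1edge s t j i := by
  unfold H1edge
  rw [adjPair_comm 1 2, adjPair_comm 1 3, adjPair_comm 2 3, adjPair_comm 1 4]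
  tauto

theorem indicator_dotProduct_mulVec_indicator {ι R : Type*} [Fintype ι] [DecidableEq ι]
    [NonAssocSemiring R] (M : Matrix ι ι R) (S : Finset ι) :
    (fun i => if i ∈ S then (1 : R) else 0) ⬝ᵥ (M *ᵥ fun i => if i ∈ S then 1 else 0)
      = ∑ i ∈ S, ∑ j ∈ S, M i j := by
  simp [dotProduct, mulVec, Finset.sum_ite_mem]

theorem card_sub_one_le_lam1_signMat {n : ℕ} {E : ℕ → ℕ → Prop} (hE : ∀ i j, E i j → E j i)
    {S : Finset (Fin n)} (hS : S.Nonempty)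
    (hindep : ∀ i ∈ S, ∀ j ∈ S, i ≠ j → ¬ E (i + 1) (j + 1)) :
    (S.card : ℝ) - 1 ≤ lam1 (signMat n E) := by
  set x : Fin n → ℝ := fun i => if i ∈ S then 1 else 0
  have hrow : ∀ i ∈ S, ∑ j ∈ S, signMat n E i j = S.card - 1 := by
    intro i hi
    rw [← Finset.add_sum_erase S _ hi, Finset.sum_congr rfl (g := fun _ => (1 : ℝ))]
    · simp [signMat, Finset.card_erase_of_mem hi, Nat.cast_sub (Finset.one_le_card.mpr ⟨i, hi⟩)]
    · intro j hj
      obtain ⟨hji, hj⟩ := Finset.mem_erase.mp hj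
      simp [signMat, hji.symm, hindep i hi j hj hji.symm]
  have hquad : x ⬝ᵥ (signMat n E *ᵥ x) = S.card * (S.card - 1) := by
    rw [indicator_dotProduct_mulVec_indicator, Finset.sum_congr rfl hrow, Finset.sum_const,
      nsmul_eq_mul]
  have hnorm : x ⬝ᵥ x = S.card := by
    simp [x, dotProduct, Finset.sum_ite_mem]
  have hrayleigh := dotProduct_mulVec_le_lam1_mul (signMat_isHermitian hE) x
  rw [hquad, hnorm, mul_comm (lam1 _)] at hrayleigh
  exact le_of_mul_le_mul_left hrayleigh (by exact_mod_cast hS.card_pos)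

/-- for `n ≥ 9`, `λ₁(A(K_n,H₁(n−5,1)⁻)) > n/2 − 1`. -/
theorem stmt9 (n : ℕ) (hn : 9 ≤ n) :
    lam1 (signMat n (H1edge (n - 5) 1)) > (n : ℝ) / 2 - 1 := by
  set S := Finset.Ici (⟨4, by omega⟩ : Fin n)
  have hindep : ∀ i ∈ S, ∀ j ∈ S, i ≠ j → ¬ H1edge (n - 5) 1 (i + 1) (j + 1) := by
    intro i hi j hj _
    simp only [S, Finset.mem_Ici, Fin.le_def] at hi hj
    unfold H1edge adjPair
    omega
  have hcard : (S.card : ℝ) = n - 4 := by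
    rw [Fin.card_Ici, Nat.cast_sub (by omega)]
    rfl
  have hbound := card_sub_one_le_lam1_signMat (H1edge_symm _ _)
    ⟨_, Finset.mem_Ici.mpr le_rfl⟩ hindep
  have hn' : (9 : ℝ) ≤ n := by exact_mod_cast hn
  linarith
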